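/- Let C and D be braided finite tensor categories over an algebraically closed field, with C non-degenerate, and let F: C → D be a braided tensor functor. Then F is full, hence fully faithful. -/

import Mathlib

set_option autoImplicit false

/-!
Since `Hom(X, Z) ≃ Hom(𝟙, Z ⊗ Xᘁ)` compatibly with a monoidal functor, it suffices to show that `F`
is bijective on morphisms out of the unit.

Injectivity: if `F h = 0` for `h : 𝟙 ⟶ W`, the image of `h` is a quotient of `𝟙`, hence
transparent, hence a finite sum of copies of `𝟙` by non-degeneracy; the exact functor `F` kills it,
and `F 𝟙 ≅ 𝟙 ≠ 0`, so the sum is empty and `h = 0`.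

Surjectivity: by the Artinian property, `g : 𝟙 ⟶ F Z` factors as `g' ≫ F m` through a minimal
subobject `m : U ⟶ Z`, and then `x ↦ g' ≫ F x` is injective on morphisms out of `U` (`F` preserves
equalizers). As `F` is braided and `𝟙` is transparent in `D`, this map identifies the mates of the
monodromy of `U` with any `Y` and of the identity, so `U` is transparent, i.e. `U ≅ 𝟙ⁿ`; since
`End(𝟙) = k`, `g'` is then the image of a morphism `𝟙 ⟶ U`.
-/

open CategoryTheory MonoidalCategory Category Limits

universe v u

namespace Paper

/-- Finiteness conditions for a finite abelian category. -/
class FiniteCategoryData (k : Type) [Field k] (D : Type u) [Category.{v} D]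
    [Preadditive D] [Linear k D] : Prop where
  homFinite : ∀ X Y : D, FiniteDimensional k (X ⟶ Y)
  noetherian : ∀ X : D, IsNoetherianObject X
  artinian : ∀ X : D, IsArtinianObject X
  enoughProjectives : EnoughProjectives D
  finitelyManySimples : ∃ (ι : Type) (_ : Finite ι) (S : ι → D),
    (∀ i, Simple (S i)) ∧ ∀ X : D, Simple X → ∃ i, Nonempty (X ≅ S i)

/-- `End(𝟙) ≅ k`. -/
def UnitEndIsBase (k : Type) [Field k] (D : Type u) [Category.{v} D] [Preadditive D]
    [Linear k D] [MonoidalCategory D] : Prop :=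
  Function.Bijective fun a : k => a • (𝟙 (𝟙_ D))

/-- Non-degeneracy of a braided category: every transparent object is a finite direct
sum of copies of the unit, i.e. the Müger center is equivalent to `Vec`. -/
def IsNondegenerate (D : Type u) [Category.{v} D] [MonoidalCategory D]
    [BraidedCategory D] [Preadditive D] : Prop :=
  ∀ X : D, (∀ Y : D, (β_ X Y).hom ≫ (β_ Y X).hom = 𝟙 (X ⊗ Y)) →
    ∃ (n : ℕ) (p : Fin n → (𝟙_ D ⟶ X)) (q : Fin n → (X ⟶ 𝟙_ D)),
      (∀ i j, p i ≫ q j = (if i = j then 𝟙 (𝟙_ D) else 0)) ∧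
      (∑ i, q i ≫ p i) = 𝟙 X

open Functor.LaxMonoidal Functor.OplaxMonoidal

section Duality

variable {C D : Type*} [Category C] [Category D] [MonoidalCategory C] [MonoidalCategory D]
  (F : C ⥤ D) [F.Monoidal]

abbrev mapExactPairing (X Y : C) [ExactPairing X Y] : ExactPairing (F.obj X) (F.obj Y) where
  coevaluation' := ε F ≫ F.map (η_ X Y) ≫ δ F X Y
  evaluation' := μ F Y X ≫ F.map (ε_ X Y) ≫ η F
  evaluation_coevaluation' := by
    rw [show (λ_ (F.obj X)).hom ≫ (ρ_ (F.obj X)).inv = ε F ▷ F.obj X ≫ μ F _ X ≫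
      F.map ((λ_ X).hom ≫ (ρ_ X).inv) ≫ δ F X _ ≫ F.obj X ◁ η F by simp,
      ← ExactPairing.evaluation_coevaluation X Y]
    simp only [F.map_comp, Functor.Monoidal.map_whiskerRight, Functor.Monoidal.map_whiskerLeft,
      Functor.Monoidal.map_associator, comp_whiskerRight, whiskerLeft_comp, assoc,
      Functor.Monoidal.μ_δ_assoc]
  coevaluation_evaluation' := by
    rw [show (ρ_ (F.obj Y)).hom ≫ (λ_ (F.obj Y)).inv = F.obj Y ◁ ε F ≫ μ F Y _ ≫
      F.map ((ρ_ Y).hom ≫ (λ_ Y).inv) ≫ δ F _ Y ≫ η F ▷ F.obj Y by simp,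
      ← ExactPairing.coevaluation_evaluation X Y]
    simp only [F.map_comp, Functor.Monoidal.map_whiskerRight, Functor.Monoidal.map_whiskerLeft,
      Functor.Monoidal.map_associator_inv, comp_whiskerRight, whiskerLeft_comp, assoc,
      Functor.Monoidal.μ_δ_assoc]

theorem tensorRightHomEquiv_whiskerRight_comp {A A' X Y Z : C} [ExactPairing X Y] (a : A ⟶ A')
    (f : A' ⊗ X ⟶ Z) :
    tensorRightHomEquiv A X Y Z (a ▷ X ≫ f) = a ≫ tensorRightHomEquiv A' X Y Z f := by
  apply (tensorRightHomEquiv A X Y Z).symm.injective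
  rw [Equiv.symm_apply_apply, tensorRightHomEquiv_symm_naturality, Equiv.symm_apply_apply]

theorem mapExactPairing_coevaluation (X Y : C) [ExactPairing X Y] :
    letI := mapExactPairing F X Y
    η_ (F.obj X) (F.obj Y) = ε F ≫ F.map (η_ X Y) ≫ δ F X Y :=
  rfl

theorem map_tensorRightHomEquiv {A X Y Z : C} [ExactPairing X Y] (f : A ⊗ X ⟶ Z) :
    letI := mapExactPairing F X Y
    F.map (tensorRightHomEquiv A X Y Z f) ≫ δ F Z Y =
      tensorRightHomEquiv (F.obj A) (F.obj X) (F.obj Y) (F.obj Z) (μ F A X ≫ F.map f) := by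
  simp only [tensorRightHomEquiv, Equiv.coe_fn_mk, mapExactPairing_coevaluation, F.map_comp,
    Functor.Monoidal.map_rightUnitor_inv, Functor.Monoidal.map_whiskerLeft,
    Functor.Monoidal.map_associator_inv, Functor.Monoidal.map_whiskerRight, assoc,
    comp_whiskerRight, whiskerLeft_comp]
  simp

def unitHomEquiv (X Y Z : C) [ExactPairing X Y] : (X ⟶ Z) ≃ (𝟙_ C ⟶ Z ⊗ Y) :=
  ((λ_ X).symm.homCongr (Iso.refl Z)).trans (tensorRightHomEquiv _ X Y Z)

theorem map_unitHomEquiv {X Y Z : C} [ExactPairing X Y] (f : X ⟶ Z) :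
    letI := mapExactPairing F X Y
    ε F ≫ F.map (unitHomEquiv X Y Z f) ≫ δ F Z Y =
      unitHomEquiv (F.obj X) (F.obj Y) (F.obj Z) (F.map f) := by
  simp only [unitHomEquiv, Equiv.trans_apply, Iso.homCongr_apply, map_tensorRightHomEquiv,
    ← tensorRightHomEquiv_whiskerRight_comp]
  simp

theorem faithful_of_map_injective_on_unit [RightRigidCategory C]
    (h : ∀ {Z : C} (f f' : 𝟙_ C ⟶ Z), F.map f = F.map f' → f = f') : F.Faithful where
  map_injective {X Z} f f' hf := by
    let := mapExactPairing F X (Xᘁ)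
    apply (unitHomEquiv X (Xᘁ) Z).injective
    apply h
    have := congrArg (unitHomEquiv (F.obj X) (F.obj (Xᘁ)) (F.obj Z)) hf
    rwa [← map_unitHomEquiv, ← map_unitHomEquiv, cancel_epi, cancel_mono] at this

theorem full_of_map_surjective_on_unit [RightRigidCategory C]
    (h : ∀ {Z : C} (g : 𝟙_ D ⟶ F.obj Z), ∃ f : 𝟙_ C ⟶ Z, ε F ≫ F.map f = g) : F.Full where
  map_surjective {X Z} g := by
    let := mapExactPairing F X (Xᘁ)
    obtain ⟨u, hu⟩ := h (unitHomEquiv (F.obj X) (F.obj (Xᘁ)) (F.obj Z) g ≫ μ F Z (Xᘁ))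
    refine ⟨(unitHomEquiv X (Xᘁ) Z).symm u,
      (unitHomEquiv (F.obj X) (F.obj (Xᘁ)) (F.obj Z)).injective ?_⟩
    rw [← map_unitHomEquiv, Equiv.apply_symm_apply, reassoc_of% hu, Functor.Monoidal.μ_δ,
      comp_id]

theorem epi_whiskerRight {W Z : C} (e : W ⟶ Z) [Epi e] (Y : C) [HasRightDual Y] :
    Epi (e ▷ Y) :=
  (Functor.preservesEpimorphisms_of_adjunction (tensorRightAdjunction Y (Yᘁ))).preserves e

end Duality

section Transparent

variable {C : Type*} [Category C] [MonoidalCategory C] [BraidedCategory C]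

/-- Membership in the Müger center. -/
def IsTransparent (X : C) : Prop :=
  ∀ Y : C, (β_ X Y).hom ≫ (β_ Y X).hom = 𝟙 (X ⊗ Y)

theorem isTransparent_tensorUnit : IsTransparent (𝟙_ C) := fun Y => by
  simp [braiding_tensorUnit_left, braiding_tensorUnit_right]

theorem IsTransparent.of_epi [RightRigidCategory C] {X Y : C} (hX : IsTransparent X)
    (e : X ⟶ Y) [Epi e] : IsTransparent Y := fun Z => by
  have := epi_whiskerRight e Z
  rw [← cancel_epi (e ▷ Z), comp_id, BraidedCategory.braiding_naturality_left_assoc,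
    BraidedCategory.braiding_naturality_right, ← assoc, hX Z, id_comp]

end Transparent

section MinimalFactorization

variable {C D : Type*} [Category C] [Category D] (F : C ⥤ D)

theorem exists_minimal_factorization {A : D} {Z : C} [IsArtinianObject Z] (g : A ⟶ F.obj Z) :
    ∃ (U : C) (m : U ⟶ Z) (gU : A ⟶ F.obj U), gU ≫ F.map m = g ∧
      ∀ (W : C) (i : W ⟶ U) [Mono i] (h : A ⟶ F.obj W), h ≫ F.map i = gU → IsIso i := by
  let S : Set (Subobject Z) := {U | ∃ h : A ⟶ F.obj U, h ≫ F.map U.arrow = g}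
  have top_mem : (⊤ : Subobject Z) ∈ S := ⟨g ≫ inv (F.map (⊤ : Subobject Z).arrow), by simp⟩
  obtain ⟨U, ⟨gU, hgU⟩, hmin⟩ := wellFounded_lt.has_min S ⟨⊤, top_mem⟩
  refine ⟨U, U.arrow, gU, hgU, fun W i _ h hh => ?_⟩
  have mem : Subobject.mk (i ≫ U.arrow) ∈ S :=
    ⟨h ≫ F.map (Subobject.underlyingIso _).inv, by
      rw [assoc, ← F.map_comp, Subobject.underlyingIso_arrow, F.map_comp, reassoc_of% hh, hgU]⟩
  have le : Subobject.mk (i ≫ U.arrow) ≤ Subobject.mk U.arrow :=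
    Subobject.mk_le_mk_of_comm i rfl
  have eq : Subobject.mk (i ≫ U.arrow) = Subobject.mk U.arrow :=
    le.eq_of_not_lt (by rw [Subobject.mk_arrow]; exact hmin _ mem)
  have : i = (Subobject.isoOfMkEqMk _ _ eq).hom := by
    rw [← cancel_mono U.arrow, Subobject.isoOfMkEqMk_hom, Subobject.ofMkLEMk_comp]
  rw [this]
  infer_instance

theorem exists_map_factorization_left_cancel [HasEqualizers C]
    [PreservesLimitsOfShape WalkingParallelPair F] {A : D} {Z : C} [IsArtinianObject Z]
    (g : A ⟶ F.obj Z) :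
    ∃ (U : C) (m : U ⟶ Z) (gU : A ⟶ F.obj U), gU ≫ F.map m = g ∧
      ∀ {V : C} (a b : U ⟶ V), gU ≫ F.map a = gU ≫ F.map b → a = b := by
  obtain ⟨U, m, gU, hgU, hmin⟩ := exists_minimal_factorization F g
  refine ⟨U, m, gU, hgU, fun a b hab => ?_⟩
  have := hmin _ (equalizer.ι a b)
    (Fork.IsLimit.lift (isLimitOfHasEqualizerOfPreservesLimit F a b) gU hab)
    (Fork.IsLimit.lift_ι' _ _ _)
  rw [← cancel_epi (equalizer.ι a b), equalizer.condition]

end MinimalFactorization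

section BraidedFunctor

variable {C D : Type*} [Category C] [Category D] [MonoidalCategory C] [MonoidalCategory D]
  [BraidedCategory C] [BraidedCategory D] (F : C ⥤ D) [F.Braided]

theorem whiskerRight_μ_map_monodromy {U : C} (x : 𝟙_ D ⟶ F.obj U) (Y : C) :
    x ▷ F.obj Y ≫ μ F U Y ≫ F.map ((β_ U Y).hom ≫ (β_ Y U).hom) = x ▷ F.obj Y ≫ μ F U Y := by
  rw [F.map_comp, Functor.LaxBraided.braided_assoc, Functor.LaxBraided.braided,
    BraidedCategory.braiding_naturality_left_assoc, BraidedCategory.braiding_naturality_right_assoc,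
    ← assoc, isTransparent_tensorUnit (F.obj Y), id_comp]

theorem isTransparent_of_map_left_cancel [RightRigidCategory C] {U : C} (x : 𝟙_ D ⟶ F.obj U)
    (hx : ∀ {V : C} (a b : U ⟶ V), x ≫ F.map a = x ≫ F.map b → a = b) : IsTransparent U :=
  fun Y => by
    let := mapExactPairing F Y (Yᘁ)
    let mate := tensorRightHomEquiv U Y (Yᘁ) (U ⊗ Y)
    apply mate.injective
    apply hx
    rw [← cancel_mono (δ F _ _), assoc, assoc, map_tensorRightHomEquiv,
      map_tensorRightHomEquiv, ← tensorRightHomEquiv_whiskerRight_comp,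
      ← tensorRightHomEquiv_whiskerRight_comp, whiskerRight_μ_map_monodromy, F.map_id, comp_id]

end BraidedFunctor

section Nondegenerate

variable {k : Type} [Field k] {C D : Type*} [Category C] [Category D] [MonoidalCategory C]
  [MonoidalCategory D] (F : C ⥤ D)

theorem not_isZero_tensorUnit [Preadditive D] [Linear k D]
    (hEnd : UnitEndIsBase k D) : ¬ IsZero (𝟙_ D) := fun h =>
  one_ne_zero (hEnd.1 (h.eq_of_src ((1 : k) • 𝟙 (𝟙_ D)) ((0 : k) • 𝟙 (𝟙_ D))))

theorem exists_ε_comp_map_eq_of_sum_eq_id [Preadditive C] [Linear k C]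
    [Preadditive D] [Linear k D] [F.Monoidal] [F.Additive] [F.Linear k]
    (hEnd : UnitEndIsBase k D) {ι : Type*} [Fintype ι] {X : C} (p : ι → (𝟙_ C ⟶ X))
    (q : ι → (X ⟶ 𝟙_ C)) (hsum : ∑ i, q i ≫ p i = 𝟙 X) (g : 𝟙_ D ⟶ F.obj X) :
    ∃ f : 𝟙_ C ⟶ X, ε F ≫ F.map f = g := by
  choose a ha using fun i => hEnd.2 (g ≫ F.map (q i) ≫ η F)
  refine ⟨∑ i, a i • p i, ?_⟩
  calc ε F ≫ F.map (∑ i, a i • p i)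
      = ∑ i, (a i • 𝟙 (𝟙_ D)) ≫ ε F ≫ F.map (p i) := by
        simp [Functor.map_sum, Preadditive.comp_sum, Linear.smul_comp, Linear.comp_smul]
    _ = g ≫ F.map (∑ i, q i ≫ p i) := by
        simp [ha, Functor.map_sum, Preadditive.comp_sum]
    _ = g := by rw [hsum, F.map_id, comp_id]

theorem IsNondegenerate.isZero_of_isZero_map [Preadditive C] [BraidedCategory C]
    [HasZeroMorphisms D] [F.Monoidal]
    (hnd : IsNondegenerate C) (hD : ¬ IsZero (𝟙_ D)) {X : C} (hX : IsTransparent X)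
    (hFX : IsZero (F.obj X)) : IsZero X := by
  obtain ⟨n, p, q, hpq, hsum⟩ := hnd X hX
  rcases isEmpty_or_nonempty (Fin n) with _ | ⟨⟨i⟩⟩
  · exact (IsZero.iff_id_eq_zero X).2 (by simp [← hsum])
  · have : IsSplitMono (F.map (p i)) :=
      .mk' ⟨F.map (q i), by rw [← F.map_comp, hpq i i, if_pos rfl, F.map_id]⟩
    exact absurd ((hFX.of_mono (F.map (p i))).of_iso (Functor.Monoidal.εIso F)) hD

theorem IsNondegenerate.eq_zero_of_map_eq_zero [Abelian C] [BraidedCategory C]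
    [RightRigidCategory C] [HasZeroMorphisms D] [F.Monoidal] [F.PreservesEpimorphisms]
    [F.PreservesMonomorphisms]
    (hnd : IsNondegenerate C) (hD : ¬ IsZero (𝟙_ D)) {W : C} (h : 𝟙_ C ⟶ W)
    (hh : F.map h = 0) : h = 0 := by
  have hι : F.map (image.ι h) = 0 :=
    zero_of_epi_comp (F.map (factorThruImage h)) (by rw [← F.map_comp, image.fac, hh])
  have hI : IsZero (F.obj (image h)) := by
    have := F.map_mono (image.ι h)
    rw [hι] at this
    exact IsZero.of_mono_zero (F.obj (image h)) (F.obj W)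
  have hIm : IsZero (image h) :=
    hnd.isZero_of_isZero_map F hD (isTransparent_tensorUnit.of_epi (factorThruImage h)) hI
  rw [← image.fac h, hIm.eq_of_tgt (factorThruImage h) 0, zero_comp]

theorem IsNondegenerate.exists_ε_comp_map_eq [Abelian C] [Linear k C] [BraidedCategory C]
    [RightRigidCategory C] [Preadditive D] [Linear k D] [BraidedCategory D] [F.Braided]
    [F.Additive] [F.Linear k] [PreservesLimitsOfShape WalkingParallelPair F]
    (hnd : IsNondegenerate C) (hEnd : UnitEndIsBase k D) {Z : C} [IsArtinianObject Z]
    (g : 𝟙_ D ⟶ F.obj Z) : ∃ f : 𝟙_ C ⟶ Z, ε F ≫ F.map f = g := by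
  obtain ⟨U, m, gU, rfl, hgU⟩ := exists_map_factorization_left_cancel F g
  obtain ⟨n, p, q, -, hsum⟩ := hnd U (isTransparent_of_map_left_cancel F gU hgU)
  obtain ⟨u, hu⟩ := exists_ε_comp_map_eq_of_sum_eq_id F hEnd p q hsum gU
  exact ⟨u ≫ m, by rw [F.map_comp, reassoc_of% hu]⟩

end Nondegenerate

theorem braided_functor_from_nondegenerate_is_full_general (k : Type) [Field k]
    {C : Type u} [Category.{v} C] [MonoidalCategory.{v} C] [BraidedCategory C]
    [Abelian C] [Linear k C]
    [RigidCategory C] (finC : FiniteCategoryData k C)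
    {D : Type u} [Category.{v} D] [MonoidalCategory.{v} D] [BraidedCategory D]
    [Abelian D] [Linear k D] (hEndD : UnitEndIsBase k D)
    (hnd : IsNondegenerate C)
    (F : C ⥤ D) [F.Braided] [F.Additive] [F.Linear k]
    [PreservesFiniteLimits F] [PreservesFiniteColimits F] :
    F.Full ∧ F.Faithful := by
  have := finC.artinian
  refine ⟨full_of_map_surjective_on_unit F fun g => hnd.exists_ε_comp_map_eq F hEndD g,
    faithful_of_map_injective_on_unit F fun f f' hff' => sub_eq_zero.1 ?_⟩
  exact hnd.eq_zero_of_map_eq_zero F (not_isZero_tensorUnit hEndD) _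
    (by rw [F.map_sub, hff', sub_self])

/-- **Statement 15.**  Let `C` and `D` be braided finite tensor categories over an
algebraically closed field `k`, with `C` non-degenerate, and let `F : C ⥤ D` be a
braided tensor functor (a `k`-linear exact strong monoidal braided functor).  Then
`F` is full, hence fully faithful. -/
theorem braided_functor_from_nondegenerate_is_full (k : Type) [Field k] [IsAlgClosed k]
    {C : Type u} [Category.{v} C] [MonoidalCategory.{v} C] [BraidedCategory C]
    [Abelian C] [Linear k C] [MonoidalPreadditive C] [MonoidalLinear k C]
    [RigidCategory C] (finC : FiniteCategoryData k C) (hEndC : UnitEndIsBase k C)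
    {D : Type u} [Category.{v} D] [MonoidalCategory.{v} D] [BraidedCategory D]
    [Abelian D] [Linear k D] [MonoidalPreadditive D] [MonoidalLinear k D]
    [RigidCategory D] (finD : FiniteCategoryData k D) (hEndD : UnitEndIsBase k D)
    (hnd : IsNondegenerate C)
    (F : C ⥤ D) [F.Monoidal] [F.Braided] [F.Additive] [F.Linear k]
    [PreservesFiniteLimits F] [PreservesFiniteColimits F] :
    F.Full ∧ F.Faithful :=
  braided_functor_from_nondegenerate_is_full_general k finC hEndD hnd F

end Paper
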